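/- Let F be a field, p monic irreducible of degree d with companion matrix x_p, and J(p, n) = id_n ⊗ x_p + N_n ⊗ id_d the generalized Jordan block. Then every matrix Δ with Δ J(p, m) = J(p, n) Δ commutes with the action of K = F[X]/(p) (i.e. Δ is K-linear as a map K^m → K^n) and satisfies Δ N_m = N_n Δ over K; conversely every such K-linear intertwiner of the shifts intertwines the Jordan blocks. In particular dim_F C_F(J(p,m), J(p,n)) = d · min(m, n). -/

import Mathlib

open Matrix Kronecker

/-- The `k×k` nilpotent Jordan block (upper shift matrix). -/
def jordanShift (F : Type*) [Semiring F] (k : ℕ) : Matrix (Fin k) (Fin k) F :=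
  fun i j => if (j : ℕ) = (i : ℕ) + 1 then 1 else 0

/-- The companion matrix of a monic polynomial `p`. -/
def companionMatrix {F : Type*} [Field F] (p : Polynomial F) :
    Matrix (Fin p.natDegree) (Fin p.natDegree) F :=
  fun i j => (if (i : ℕ) = (j : ℕ) + 1 then 1 else 0)
    + (if (j : ℕ) = p.natDegree - 1 then -p.coeff (i : ℕ) else 0)

/-- The generalized Jordan block `J(p, n) = id_n ⊗ x_p + N_n ⊗ id_d`. -/
noncomputable def genJordan {F : Type*} [Field F] (p : Polynomial F) (n : ℕ) :
    Matrix (Fin n × Fin p.natDegree) (Fin n × Fin p.natDegree) F :=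
  (1 : Matrix (Fin n) (Fin n) F) ⊗ₖ companionMatrix p
    + jordanShift F n ⊗ₖ (1 : Matrix (Fin p.natDegree) (Fin p.natDegree) F)

/-- The linear map `Δ ↦ Δ A - B Δ` on rectangular matrices. -/
noncomputable def sylvesterMap {F : Type*} [CommRing F] {ι κ : Type*} [Fintype ι] [Fintype κ]
    (A : Matrix ι ι F) (B : Matrix κ κ F) :
    Matrix κ ι F →ₗ[F] Matrix κ ι F where
  toFun Δ := Δ * A - B * Δ
  map_add' x y := by simp [Matrix.add_mul, Matrix.mul_add]; abel
  map_smul' c x := by simp [Matrix.smul_mul, Matrix.mul_smul, smul_sub]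

/-!
`J(p, k) = (1 ⊗ x_p) + (N_k ⊗ 1)` is a Jordan–Chevalley decomposition: the first summand is
killed by the squarefree polynomial `p`, hence semisimple, the second is nilpotent, and the two
commute. An intertwiner `Δ` of `J(p, m)` and `J(p, n)`, viewed as `(v, w) ↦ (0, Δ v)` on the
direct sum, commutes with `J(p, m) ⊕ J(p, n)`, hence with its semisimple part, which is a
polynomial in it; so `Δ` intertwines the two summands separately.

Writing `x_p` as multiplication by the root in `K = F[X]/(p)`, the matrices commuting with `x_p`
are those of multiplication by elements of `K`, and intertwiners of `N_m ⊗ 1` and `N_n ⊗ 1` are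
block-Toeplitz with `min m n` free blocks. Hence the intertwiners form a copy of `K ^ min m n`,
of `F`-dimension `d · min m n`.
-/

open Polynomial

namespace Module.End

variable {K V : Type*} [Field K] [PerfectField K] [AddCommGroup V] [Module K V]
  [FiniteDimensional K V]

theorem commute_of_commute_semisimple_add_nilpotent {x s n : End K V} (hs : s.IsSemisimple)
    (hn : IsNilpotent n) (hsn : Commute s n) (hx : Commute x (s + n)) : Commute x s := by
  obtain ⟨n₀, hn₀, s₀, hs₀, hn₀_nil, hs₀_ss, hf⟩ := (s + n).exists_isNilpotent_isSemisimple
  have hc₀ : Commute n₀ s₀ := Algebra.commute_of_mem_adjoin_singleton_of_commute hs₀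
    (Algebra.commute_of_mem_adjoin_self hn₀).symm
  obtain ⟨-, rfl⟩ := isNilpotent_isSemisimple_unique hn hs hn₀_nil hs₀_ss hsn.symm hc₀
    ((add_comm n s).trans hf)
  exact Algebra.commute_of_mem_adjoin_singleton_of_commute hs₀ hx

end Module.End

theorem Prod.isNilpotent_mk {R S : Type*} [MonoidWithZero R] [MonoidWithZero S] {a : R} {b : S}
    (ha : IsNilpotent a) (hb : IsNilpotent b) : IsNilpotent (a, b) := by
  obtain ⟨k, hk⟩ := ha
  obtain ⟨l, hl⟩ := hb
  exact ⟨max k l, Prod.ext (pow_eq_zero_of_le (le_max_left k l) hk)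
    (pow_eq_zero_of_le (le_max_right k l) hl)⟩

namespace LinearMap

variable {K V W : Type*} [Field K] [PerfectField K] [AddCommGroup V] [Module K V]
  [FiniteDimensional K V] [AddCommGroup W] [Module K W] [FiniteDimensional K W]

theorem comp_eq_of_comp_semisimple_add_nilpotent {P : K[X]} (hP : Squarefree P)
    {s₁ n₁ : Module.End K V} {s₂ n₂ : Module.End K W} (hs₁ : aeval s₁ P = 0)
    (hs₂ : aeval s₂ P = 0) (hn₁ : IsNilpotent n₁) (hn₂ : IsNilpotent n₂)
    (h₁ : Commute s₁ n₁) (h₂ : Commute s₂ n₂) {T : V →ₗ[K] W}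
    (hT : T ∘ₗ (s₁ + n₁) = (s₂ + n₂) ∘ₗ T) : T ∘ₗ s₁ = s₂ ∘ₗ T := by
  have hs : (prodMapAlgHom K V W (s₁, s₂)).IsSemisimple :=
    Module.End.isSemisimple_of_squarefree_aeval_eq_zero hP
      (by rw [aeval_algHom_apply, aeval_prod_apply, hs₁, hs₂]; exact map_zero _)
  have hn : IsNilpotent (prodMapAlgHom K V W (n₁, n₂)) :=
    (Prod.isNilpotent_mk hn₁ hn₂).map _
  have hsn : Commute (prodMapAlgHom K V W (s₁, s₂)) (prodMapAlgHom K V W (n₁, n₂)) :=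
    (h₁.prod h₂).map _
  have hx : Commute (inr K V W ∘ₗ T ∘ₗ fst K V W)
      (prodMapAlgHom K V W (s₁, s₂) + prodMapAlgHom K V W (n₁, n₂)) := by
    refine LinearMap.ext fun ⟨v, w⟩ => ?_
    simpa using congr($hT v)
  have := Module.End.commute_of_commute_semisimple_add_nilpotent hs hn hsn hx
  ext v
  simpa using congr($(this.eq) (v, 0))

end LinearMap

namespace Matrix

section Intertwiner

variable {K ι κ : Type*} [Field K] [PerfectField K] [Fintype ι] [DecidableEq ι] [Fintype κ]
  [DecidableEq κ]

theorem mul_eq_of_mul_semisimple_add_nilpotent {P : K[X]} (hP : Squarefree P)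
    {S₁ N₁ : Matrix ι ι K} {S₂ N₂ : Matrix κ κ K} (hS₁ : aeval S₁ P = 0)
    (hS₂ : aeval S₂ P = 0) (hN₁ : IsNilpotent N₁) (hN₂ : IsNilpotent N₂)
    (h₁ : Commute S₁ N₁) (h₂ : Commute S₂ N₂) {Δ : Matrix κ ι K}
    (hΔ : Δ * (S₁ + N₁) = (S₂ + N₂) * Δ) : Δ * S₁ = S₂ * Δ := by
  have hT := congr(toLin' $hΔ)
  rw [toLin'_mul, toLin'_mul, map_add, map_add] at hT
  apply toLin'.injective
  rw [toLin'_mul, toLin'_mul]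
  refine LinearMap.comp_eq_of_comp_semisimple_add_nilpotent hP
    (s₁ := toLinAlgEquiv' S₁) (s₂ := toLinAlgEquiv' S₂) ?_ ?_ (hN₁.map toLinAlgEquiv')
    (hN₂.map toLinAlgEquiv') (h₁.map toLinAlgEquiv') (h₂.map toLinAlgEquiv') hT
  · rw [aeval_algEquiv, AlgHom.comp_apply, hS₁, map_zero]
  · rw [aeval_algEquiv, AlgHom.comp_apply, hS₂, map_zero]

end Intertwiner

section Kronecker

variable {R : Type*} [CommSemiring R] {l m n κ : Type*}

variable (R l κ) in
def oneKroneckerAlgHom [Fintype l] [DecidableEq l] [Fintype κ] [DecidableEq κ] :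
    Matrix κ κ R →ₐ[R] Matrix (l × κ) (l × κ) R where
  toFun M := 1 ⊗ₖ M
  map_one' := one_kronecker_one
  map_mul' M N := by rw [← mul_kronecker_mul, one_mul]
  map_zero' := kronecker_zero _
  map_add' := kronecker_add _
  commutes' r := by simp [Algebra.algebraMap_eq_smul_one, kronecker_smul]

variable (R l κ) in
def kroneckerOneAlgHom [Fintype l] [DecidableEq l] [Fintype κ] [DecidableEq κ] :
    Matrix l l R →ₐ[R] Matrix (l × κ) (l × κ) R where
  toFun M := M ⊗ₖ 1
  map_one' := one_kronecker_one
  map_mul' M N := by rw [← mul_kronecker_mul, one_mul]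
  map_zero' := zero_kronecker _
  map_add' M N := add_kronecker M N _
  commutes' r := by simp [Algebra.algebraMap_eq_smul_one, smul_kronecker]

theorem commute_one_kronecker_kronecker_one [Fintype l] [DecidableEq l] [Fintype κ]
    [DecidableEq κ] (A : Matrix l l R) (B : Matrix κ κ R) :
    Commute ((1 : Matrix l l R) ⊗ₖ B) (A ⊗ₖ (1 : Matrix κ κ R)) := by
  rw [Commute, SemiconjBy, ← mul_kronecker_mul, ← mul_kronecker_mul, Matrix.one_mul,
    Matrix.mul_one, Matrix.one_mul, Matrix.mul_one]

theorem mul_kronecker_one_apply [Fintype m] [Fintype κ] [DecidableEq κ]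
    (Δ : Matrix (l × κ) (m × κ) R) (X : Matrix m n R) (i : l) (a : κ) (j : n) (b : κ) :
    (Δ * (X ⊗ₖ (1 : Matrix κ κ R))) (i, a) (j, b) = ∑ j', Δ (i, a) (j', b) * X j' j := by
  simp [mul_apply, Fintype.sum_prod_type, one_apply]

theorem kronecker_one_mul_apply [Fintype m] [Fintype κ] [DecidableEq κ]
    (X : Matrix l m R) (Δ : Matrix (m × κ) (n × κ) R) (i : l) (a : κ) (j : n) (b : κ) :
    ((X ⊗ₖ (1 : Matrix κ κ R)) * Δ) (i, a) (j, b) = ∑ i', X i i' * Δ (i', a) (j, b) := by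
  simp [mul_apply, Fintype.sum_prod_type, one_apply]

end Kronecker

theorem mul_pow_eq_pow_mul {R ι κ : Type*} [Semiring R] [Fintype ι] [DecidableEq ι] [Fintype κ]
    [DecidableEq κ] {Δ : Matrix κ ι R} {X : Matrix ι ι R} {Y : Matrix κ κ R}
    (h : Δ * X = Y * Δ) (t : ℕ) : Δ * X ^ t = Y ^ t * Δ := by
  induction t with
  | zero => simp
  | succ t ih =>
    rw [pow_succ, ← Matrix.mul_assoc, ih, Matrix.mul_assoc, h, ← Matrix.mul_assoc, ← pow_succ]

end Matrix

section ShiftMatrix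

variable (R : Type*) [Semiring R]

def shiftMatrix (n m s : ℕ) : Matrix (Fin n) (Fin m) R :=
  of fun i j => if (j : ℕ) = i + s then 1 else 0

variable {R}

theorem shiftMatrix_apply (n m s : ℕ) (i : Fin n) (j : Fin m) :
    shiftMatrix R n m s i j = if (j : ℕ) = i + s then 1 else 0 := rfl

theorem jordanShift_eq_shiftMatrix (k : ℕ) : jordanShift R k = shiftMatrix R k k 1 := rfl

theorem shiftMatrix_zero (k : ℕ) : shiftMatrix R k k 0 = 1 := by
  ext i j
  simp [shiftMatrix_apply, one_apply, Fin.ext_iff, eq_comm]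

theorem shiftMatrix_eq_zero {n m s : ℕ} (h : m ≤ s) : shiftMatrix R n m s = 0 := by
  ext i j
  rw [shiftMatrix_apply, if_neg (by omega), Matrix.zero_apply]

theorem shiftMatrix_mul_shiftMatrix {n m l s t : ℕ} (h : l ≤ m + t) :
    shiftMatrix R n m s * shiftMatrix R m l t = shiftMatrix R n l (s + t) := by
  ext i j
  rw [mul_apply, shiftMatrix_apply]
  by_cases hs : (i : ℕ) + s < m
  · rw [Finset.sum_eq_single ⟨i + s, hs⟩ (fun j' _ hj' => by
      rw [shiftMatrix_apply, if_neg (fun h => hj' (Fin.ext h)), zero_mul]) (by simp)]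
    simp [shiftMatrix_apply, add_assoc]
  · rw [Finset.sum_eq_zero fun j' _ => by rw [shiftMatrix_apply, if_neg (by omega), zero_mul],
      if_neg (by omega)]

theorem jordanShift_pow (k t : ℕ) : jordanShift R k ^ t = shiftMatrix R k k t := by
  induction t with
  | zero => rw [pow_zero, shiftMatrix_zero]
  | succ t ih =>
    rw [pow_succ, ih, jordanShift_eq_shiftMatrix, shiftMatrix_mul_shiftMatrix (by omega)]

theorem isNilpotent_jordanShift (k : ℕ) : IsNilpotent (jordanShift R k) :=
  ⟨k, by rw [jordanShift_pow, shiftMatrix_eq_zero le_rfl]⟩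

theorem shiftMatrix_mul_jordanShift {n m s : ℕ} (h : m ≤ n + s) :
    shiftMatrix R n m s * jordanShift R m = jordanShift R n * shiftMatrix R n m s := by
  rw [jordanShift_eq_shiftMatrix, jordanShift_eq_shiftMatrix,
    shiftMatrix_mul_shiftMatrix (by omega), shiftMatrix_mul_shiftMatrix h, add_comm]

end ShiftMatrix

section Toeplitz

variable {R κ : Type*} [CommSemiring R] {n m : ℕ}

theorem mul_shiftMatrix_kronecker_one_apply [Fintype κ] [DecidableEq κ]
    (Δ : Matrix (Fin n × κ) (Fin m × κ) R) (t : ℕ) (i : Fin n) (a : κ) (j : Fin m) (b : κ) :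
    (Δ * (shiftMatrix R m m t ⊗ₖ (1 : Matrix κ κ R))) (i, a) (j, b)
      = if h : t ≤ j then Δ (i, a) (⟨j - t, by omega⟩, b) else 0 := by
  rw [mul_kronecker_one_apply]
  split_ifs with h
  · rw [Finset.sum_eq_single ⟨j - t, by omega⟩ (fun j' _ hj' => by
      rw [shiftMatrix_apply, if_neg (fun e => hj' (Fin.ext (by simp; omega))), mul_zero])
      (by simp)]
    rw [shiftMatrix_apply, if_pos (by simp; omega), mul_one]
  · exact Finset.sum_eq_zero fun j' _ => by rw [shiftMatrix_apply, if_neg (by omega), mul_zero]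

theorem shiftMatrix_kronecker_one_mul_apply [Fintype κ] [DecidableEq κ]
    (Δ : Matrix (Fin n × κ) (Fin m × κ) R) (t : ℕ) (i : Fin n) (a : κ) (j : Fin m) (b : κ) :
    ((shiftMatrix R n n t ⊗ₖ (1 : Matrix κ κ R)) * Δ) (i, a) (j, b)
      = if h : i + t < n then Δ (⟨i + t, h⟩, a) (j, b) else 0 := by
  rw [kronecker_one_mul_apply]
  split_ifs with h
  · rw [Finset.sum_eq_single ⟨i + t, h⟩ (fun i' _ hi' => by
      rw [shiftMatrix_apply, if_neg (fun e => hi' (Fin.ext e)), zero_mul]) (by simp)]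
    rw [shiftMatrix_apply, if_pos rfl, one_mul]
  · exact Finset.sum_eq_zero fun i' _ => by rw [shiftMatrix_apply, if_neg (by omega), zero_mul]

theorem apply_eq_of_mul_jordanShift_kronecker_one [Fintype κ] [DecidableEq κ]
    {Δ : Matrix (Fin n × κ) (Fin m × κ) R}
    (hΔ : Δ * (jordanShift R m ⊗ₖ (1 : Matrix κ κ R))
      = (jordanShift R n ⊗ₖ (1 : Matrix κ κ R)) * Δ)
    (i : Fin n) (a : κ) (j : Fin m) (b : κ) :
    Δ (i, a) (j, b)
      = if h : i + (m - n) ≤ j then Δ (⟨0, by omega⟩, a) (⟨j - i, by omega⟩, b) else 0 := by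
  -- `Δ` intertwines the powers `N ^ t`; compare entries for `t = i`, `t = n` and `t = j + 1`.
  have key (t : ℕ) (i : Fin n) (j : Fin m) :
      (if h : t ≤ j then Δ (i, a) (⟨j - t, by omega⟩, b) else 0)
        = if h : i + t < n then Δ (⟨i + t, h⟩, a) (j, b) else 0 := by
    have hpow (k : ℕ) :
        (jordanShift R k ⊗ₖ (1 : Matrix κ κ R)) ^ t = shiftMatrix R k k t ⊗ₖ 1 := by
      rw [← jordanShift_pow]
      exact (map_pow (kroneckerOneAlgHom R (Fin k) κ) _ t).symm
    have := congr($(mul_pow_eq_pow_mul hΔ t) (i, a) (j, b))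
    rwa [hpow, hpow, mul_shiftMatrix_kronecker_one_apply,
      shiftMatrix_kronecker_one_mul_apply] at this
  split_ifs with hij
  · simpa [show (i : ℕ) ≤ j by omega] using (key i ⟨0, by omega⟩ j).symm
  by_cases hji : (i : ℕ) ≤ j
  · have hzero := key n ⟨0, by omega⟩ ⟨j - i + n, by omega⟩
    simp only [le_add_iff_nonneg_left, zero_le, dite_true, add_tsub_cancel_right, zero_add,
      lt_self_iff_false, dite_false] at hzero
    rw [← hzero]
    simpa [hji] using (key i ⟨0, by omega⟩ j).symm
  · have hzero := key (j + 1) ⟨i - j - 1, by omega⟩ j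
    simp only [add_le_iff_nonpos_right, nonpos_iff_eq_zero, one_ne_zero, dite_false] at hzero
    rw [dif_pos (by omega)] at hzero
    convert hzero.symm using 4
    omega

/-- By truncated subtraction, block columns `m - n + k` are the last `min m n` ones. -/
def toeplitzBlock (Δ : Matrix (Fin n × κ) (Fin m × κ) R) (k : Fin (min m n)) : Matrix κ κ R :=
  of fun a b => Δ (⟨0, by have := k.isLt; omega⟩, a) (⟨m - n + k, by omega⟩, b)

variable (R κ n m) in
def toeplitzKronecker :
    (Fin (min m n) → Matrix κ κ R) →ₗ[R] Matrix (Fin n × κ) (Fin m × κ) R where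
  toFun X := ∑ k : Fin (min m n), shiftMatrix R n m (m - n + k) ⊗ₖ X k
  map_add' X Y := by simp [kronecker_add, Finset.sum_add_distrib]
  map_smul' r X := by simp [kronecker_smul, Finset.smul_sum]

theorem toeplitzKronecker_apply (X : Fin (min m n) → Matrix κ κ R) :
    toeplitzKronecker R κ n m X = ∑ k : Fin (min m n), shiftMatrix R n m (m - n + k) ⊗ₖ X k :=
  rfl

theorem toeplitzBlock_toeplitzKronecker (X : Fin (min m n) → Matrix κ κ R) :
    toeplitzBlock (toeplitzKronecker R κ n m X) = X := by
  funext k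
  ext a b
  simp [toeplitzBlock, toeplitzKronecker_apply, Matrix.sum_apply, shiftMatrix_apply, Fin.val_inj]

theorem toeplitzKronecker_toeplitzBlock [Fintype κ] [DecidableEq κ]
    {Δ : Matrix (Fin n × κ) (Fin m × κ) R}
    (hΔ : Δ * (jordanShift R m ⊗ₖ (1 : Matrix κ κ R))
      = (jordanShift R n ⊗ₖ (1 : Matrix κ κ R)) * Δ) :
    toeplitzKronecker R κ n m (toeplitzBlock Δ) = Δ := by
  ext ⟨i, a⟩ ⟨j, b⟩
  rw [apply_eq_of_mul_jordanShift_kronecker_one hΔ]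
  simp only [toeplitzKronecker_apply, Matrix.sum_apply, kronecker_apply, shiftMatrix_apply,
    toeplitzBlock, of_apply, ite_mul, one_mul, zero_mul]
  split_ifs with h
  · rw [Finset.sum_eq_single ⟨j - i - (m - n), by omega⟩ (fun k _ hk => if_neg fun e => hk
      (Fin.ext (by simp only; omega))) (by simp), if_pos (by simp only; omega)]
    congr 4
    simp only
    omega
  · exact Finset.sum_eq_zero fun k _ => if_neg (by omega)

theorem toeplitzKronecker_mul_jordanShift [Fintype κ] [DecidableEq κ]
    (X : Fin (min m n) → Matrix κ κ R) :
    toeplitzKronecker R κ n m X * (jordanShift R m ⊗ₖ (1 : Matrix κ κ R))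
      = (jordanShift R n ⊗ₖ (1 : Matrix κ κ R)) * toeplitzKronecker R κ n m X := by
  simp only [toeplitzKronecker_apply, Matrix.sum_mul, Matrix.mul_sum, ← mul_kronecker_mul,
    Matrix.mul_one, Matrix.one_mul]
  exact Finset.sum_congr rfl fun k _ => by rw [shiftMatrix_mul_jordanShift (by omega)]

theorem toeplitzKronecker_mul_one_kronecker [Fintype κ] (X : Fin (min m n) → Matrix κ κ R)
    (C : Matrix κ κ R) :
    toeplitzKronecker R κ n m X * ((1 : Matrix (Fin m) (Fin m) R) ⊗ₖ C)
      = toeplitzKronecker R κ n m (fun k => X k * C) := by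
  simp only [toeplitzKronecker_apply, Matrix.sum_mul, ← mul_kronecker_mul, Matrix.mul_one]

theorem one_kronecker_mul_toeplitzKronecker [Fintype κ] (X : Fin (min m n) → Matrix κ κ R)
    (C : Matrix κ κ R) :
    ((1 : Matrix (Fin n) (Fin n) R) ⊗ₖ C) * toeplitzKronecker R κ n m X
      = toeplitzKronecker R κ n m (fun k => C * X k) := by
  simp only [toeplitzKronecker_apply, Matrix.mul_sum, ← mul_kronecker_mul, Matrix.one_mul]

end Toeplitz

section Companion

variable {F : Type*} [Field F] {p : F[X]}

theorem companionMatrix_eq_leftMulMatrix (hp : p.Monic) :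
    companionMatrix p
      = Algebra.leftMulMatrix (AdjoinRoot.powerBasisAux' hp) (AdjoinRoot.root p) := by
  have hgen : (AdjoinRoot.powerBasis' hp).minpolyGen = p := by
    rw [PowerBasis.minpolyGen_eq, AdjoinRoot.powerBasis'_gen, AdjoinRoot.minpoly_root hp.ne_zero,
      hp.leadingCoeff, inv_one, C_1, mul_one]
  have hmat := (AdjoinRoot.powerBasis' hp).leftMulMatrix
  rw [hgen, AdjoinRoot.powerBasis'_gen] at hmat
  refine (hmat.trans ?_).symm
  ext i j
  have hi := i.isLt
  simp only [companionMatrix, of_apply, AdjoinRoot.powerBasis'_dim] at hi ⊢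
  split_ifs <;> first | rfl | (exfalso; omega) | simp

theorem aeval_companionMatrix (hp : p.Monic) : aeval (companionMatrix p) p = 0 := by
  rw [companionMatrix_eq_leftMulMatrix hp, aeval_algHom_apply, AdjoinRoot.aeval_eq,
    AdjoinRoot.mk_self, map_zero]

theorem exists_leftMulMatrix_eq_of_commute (hp : p.Monic)
    {M : Matrix (Fin p.natDegree) (Fin p.natDegree) F} (hM : Commute M (companionMatrix p)) :
    ∃ x, Algebra.leftMulMatrix (AdjoinRoot.powerBasisAux' hp) x = M := by
  set b := AdjoinRoot.powerBasisAux' hp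
  have hcomm (y : AdjoinRoot p) : Commute M (Algebra.leftMulMatrix b y) := by
    obtain ⟨q, rfl⟩ := AdjoinRoot.mk_surjective y
    rw [← AdjoinRoot.aeval_eq, ← aeval_algHom_apply, ← companionMatrix_eq_leftMulMatrix hp]
    exact Algebra.commute_of_mem_adjoin_singleton_of_commute (aeval_mem_adjoin_singleton F _) hM
  -- `M` is multiplication by the element whose coordinates form its first column `M (repr 1)`.
  refine ⟨b.equivFun.symm (M *ᵥ b.repr 1), ext_iff_mulVec.mpr fun v => ?_⟩
  obtain ⟨y, rfl⟩ := b.equivFun.surjective v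
  have hx : b.repr (b.equivFun.symm (M *ᵥ b.repr 1)) = M *ᵥ b.repr 1 :=
    b.equivFun.apply_symm_apply _
  rw [Module.Basis.equivFun_apply, Algebra.leftMulMatrix_mulVec_repr, mul_comm,
    ← Algebra.leftMulMatrix_mulVec_repr, hx, mulVec_mulVec, ← (hcomm y).eq, ← mulVec_mulVec,
    Algebra.leftMulMatrix_mulVec_repr, mul_one]

end Companion

section GenJordan

variable {F : Type*} [Field F] {p : F[X]} {m n : ℕ}

theorem mul_genJordan_eq_genJordan_mul_iff [PerfectField F] (hp : p.Monic) (hsq : Squarefree p)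
    (Δ : Matrix (Fin n × Fin p.natDegree) (Fin m × Fin p.natDegree) F) :
    Δ * genJordan p m = genJordan p n * Δ ↔
      (Δ * ((1 : Matrix (Fin m) (Fin m) F) ⊗ₖ companionMatrix p)
          = ((1 : Matrix (Fin n) (Fin n) F) ⊗ₖ companionMatrix p) * Δ ∧
       Δ * (jordanShift F m ⊗ₖ (1 : Matrix (Fin p.natDegree) (Fin p.natDegree) F))
          = (jordanShift F n ⊗ₖ (1 : Matrix (Fin p.natDegree) (Fin p.natDegree) F)) * Δ) := by
  have hS (k : ℕ) : aeval ((1 : Matrix (Fin k) (Fin k) F) ⊗ₖ companionMatrix p) p = 0 := by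
    rw [show (1 : Matrix (Fin k) (Fin k) F) ⊗ₖ companionMatrix p
        = oneKroneckerAlgHom F (Fin k) _ (companionMatrix p) from rfl,
      aeval_algHom_apply, aeval_companionMatrix hp, map_zero]
  have hN (k : ℕ) :
      IsNilpotent (jordanShift F k ⊗ₖ (1 : Matrix (Fin p.natDegree) (Fin p.natDegree) F)) :=
    (isNilpotent_jordanShift k).map (kroneckerOneAlgHom F (Fin k) (Fin p.natDegree))
  have hSN (k : ℕ) := commute_one_kronecker_kronecker_one (jordanShift F k) (companionMatrix p)
  rw [genJordan, genJordan]
  constructor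
  · intro h
    have hA := mul_eq_of_mul_semisimple_add_nilpotent hsq (hS m) (hS n) (hN m) (hN n) (hSN m)
      (hSN n) h
    rw [Matrix.mul_add, Matrix.add_mul, hA] at h
    exact ⟨hA, add_left_cancel h⟩
  · rintro ⟨hA, hB⟩
    rw [Matrix.mul_add, Matrix.add_mul, hA, hB]

variable (m n) in
noncomputable def toeplitzIntertwiner (hp : p.Monic) : (Fin (min m n) → AdjoinRoot p) →ₗ[F]
    Matrix (Fin n × Fin p.natDegree) (Fin m × Fin p.natDegree) F :=
  toeplitzKronecker F (Fin p.natDegree) n m ∘ₗ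
    LinearMap.compLeft (Algebra.leftMulMatrix (AdjoinRoot.powerBasisAux' hp)).toLinearMap _

theorem toeplitzIntertwiner_apply (hp : p.Monic) (c : Fin (min m n) → AdjoinRoot p) :
    toeplitzIntertwiner m n hp c
      = toeplitzKronecker F (Fin p.natDegree) n m
          (fun k => Algebra.leftMulMatrix (AdjoinRoot.powerBasisAux' hp) (c k)) := rfl

theorem toeplitzIntertwiner_injective (hp : p.Monic) :
    Function.Injective (toeplitzIntertwiner m n hp) := by
  intro c c' h
  rw [toeplitzIntertwiner_apply, toeplitzIntertwiner_apply] at h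
  have := congr_arg toeplitzBlock h
  rw [toeplitzBlock_toeplitzKronecker, toeplitzBlock_toeplitzKronecker] at this
  exact funext fun k =>
    Algebra.leftMulMatrix_injective (AdjoinRoot.powerBasisAux' hp) (congr_fun this k)

theorem range_toeplitzIntertwiner [PerfectField F] (hp : p.Monic) (hsq : Squarefree p) :
    LinearMap.range (toeplitzIntertwiner m n hp)
      = LinearMap.ker (sylvesterMap (genJordan p m) (genJordan p n)) := by
  ext Δ
  rw [LinearMap.mem_ker, show sylvesterMap (genJordan p m) (genJordan p n) Δ
      = Δ * genJordan p m - genJordan p n * Δ from rfl, sub_eq_zero,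
    mul_genJordan_eq_genJordan_mul_iff hp hsq]
  constructor
  · rintro ⟨c, rfl⟩
    refine ⟨?_, toeplitzKronecker_mul_jordanShift _⟩
    rw [toeplitzIntertwiner_apply, toeplitzKronecker_mul_one_kronecker,
      one_kronecker_mul_toeplitzKronecker, companionMatrix_eq_leftMulMatrix hp]
    simp only [← map_mul, mul_comm]
  · rintro ⟨hA, hB⟩
    rw [← toeplitzKronecker_toeplitzBlock hB, toeplitzKronecker_mul_one_kronecker,
      one_kronecker_mul_toeplitzKronecker] at hA
    have hblock := congr(toeplitzBlock $hA)
    simp only [toeplitzBlock_toeplitzKronecker] at hblock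
    choose c hc using fun k => exists_leftMulMatrix_eq_of_commute hp (congr_fun hblock k)
    refine ⟨c, ?_⟩
    rw [toeplitzIntertwiner_apply, funext hc, toeplitzKronecker_toeplitzBlock hB]

end GenJordan

/-- A matrix `Δ` intertwines `J(p, m)` and `J(p, n)` iff it commutes with the
diagonal action of `K = F[X]/(p)` (i.e. with `id ⊗ x_p`) and intertwines the
shifts (`Δ (N_m ⊗ id) = (N_n ⊗ id) Δ`); moreover the space of such intertwiners
has `F`-dimension `d · min(m, n)` where `d = deg p`. -/
theorem genJordan_intertwiner_iff {F : Type*} [Field F] [CharZero F]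
    (p : Polynomial F) (hpm : p.Monic) (hpi : Irreducible p) (m n : ℕ) :
    (∀ Δ : Matrix (Fin n × Fin p.natDegree) (Fin m × Fin p.natDegree) F,
      Δ * genJordan p m = genJordan p n * Δ ↔
        (Δ * ((1 : Matrix (Fin m) (Fin m) F) ⊗ₖ companionMatrix p)
            = ((1 : Matrix (Fin n) (Fin n) F) ⊗ₖ companionMatrix p) * Δ ∧
         Δ * (jordanShift F m ⊗ₖ (1 : Matrix (Fin p.natDegree) (Fin p.natDegree) F))
            = (jordanShift F n ⊗ₖ (1 : Matrix (Fin p.natDegree) (Fin p.natDegree) F)) * Δ)) ∧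
    Module.finrank F
      (LinearMap.ker (sylvesterMap (genJordan p m) (genJordan p n)))
        = p.natDegree * min m n := by
  refine ⟨mul_genJordan_eq_genJordan_mul_iff hpm hpi.squarefree, ?_⟩
  have : Module.Finite F (AdjoinRoot p) := hpm.finite_adjoinRoot
  rw [← range_toeplitzIntertwiner hpm hpi.squarefree,
    LinearMap.finrank_range_of_inj (toeplitzIntertwiner_injective hpm), Module.finrank_pi_fintype,
    Finset.sum_const, Finset.card_univ, Fintype.card_fin, smul_eq_mul,
    Module.finrank_eq_card_basis (AdjoinRoot.powerBasisAux' hpm), Fintype.card_fin, mul_comm]
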